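/- Let n ≥ 2, let W ⊆ ℂ^{n+2} be a 4-dimensional conjugation-stable complex subspace on which B is nondegenerate and such that W ∩ ℝ^{n+1,1} has signature (3,1), and let T ∈ O(ℂ^{n+2}) be such that TW is also conjugation-stable. Write C for the conjugation v ↦ v̄ and T̄ := C ∘ T ∘ C. Then T^{-1} ∘ T̄ is a ℂ-linear automorphism of ℂ^{n+2} mapping W to itself, and (TW) ∩ ℝ^{n+1,1} has signature (3,1) if and only if det((T^{-1} ∘ T̄)|_W) = 1. -/

import Mathlib

noncomputable section

open Module

/-- The complexification `ℂ^{n+2}` of `ℝ^{n+1,1}`. -/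
abbrev Cn (n : ℕ) := Fin (n + 2) → ℂ

/-- The complex-bilinear extension `B` of the signature `(n+1,1)` inner product on
`ℝ^{n+1,1}`. -/
def Bf (n : ℕ) (v w : Cn n) : ℂ :=
  ∑ i : Fin (n + 2), (if (i : ℕ) < n + 1 then 1 else -1) * v i * w i

lemma Bf_add_left {n : ℕ} (v v' w : Cn n) :
    Bf n (v + v') w = Bf n v w + Bf n v' w := by
  simp only [Bf, Pi.add_apply, ← Finset.sum_add_distrib]
  exact Finset.sum_congr rfl fun i _ => by ring

lemma Bf_smul_left {n : ℕ} (c : ℂ) (v w : Cn n) :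
    Bf n (c • v) w = c * Bf n v w := by
  simp only [Bf, Pi.smul_apply, smul_eq_mul, Finset.mul_sum]
  exact Finset.sum_congr rfl fun i _ => by ring

lemma Bf_zero_left {n : ℕ} (w : Cn n) : Bf n 0 w = 0 := by
  simp [Bf]

/-- Complex conjugation on `ℂ^{n+2}`, as a `conj`-semilinear automorphism;
its fixed point set is `ℝ^{n+1,1}`. -/
def conjSL (n : ℕ) : Cn n →ₛₗ[starRingEnd ℂ] Cn n where
  toFun v := fun i => starRingEnd ℂ (v i)
  map_add' a b := by funext i; simp
  map_smul' c v := by funext i; simp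

instance : RingHomSurjective (starRingEnd ℂ) :=
  ⟨fun x => ⟨starRingEnd ℂ x, by simp⟩⟩

/-- The conjugate `Ū` of a complex subspace `U` of `ℂ^{n+2}`. -/
def conjSub {n : ℕ} (U : Submodule ℂ (Cn n)) : Submodule ℂ (Cn n) :=
  U.map (conjSL n)

/-- The real points `ℝ^{n+1,1}` inside `ℂ^{n+2}`, as a real subspace. -/
def realSub (n : ℕ) : Submodule ℝ (Cn n) where
  carrier := {v | ∀ i, starRingEnd ℂ (v i) = v i}
  add_mem' := by
    intro a b ha hb i
    simp only [Pi.add_apply, map_add, ha i, hb i]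
  zero_mem' := by intro i; simp
  smul_mem' := by
    intro c v hv i
    simp only [Pi.smul_apply, Complex.real_smul, map_mul, Complex.conj_ofReal, hv i]

/-- The real points `W ∩ ℝ^{n+1,1}` of a complex subspace `W ⊆ ℂ^{n+2}`. -/
def realPoints {n : ℕ} (W : Submodule ℂ (Cn n)) : Submodule ℝ (Cn n) :=
  (W.restrictScalars ℝ) ⊓ realSub n

/-- The Gram matrix `diag(1,1,1,-1)`. -/
def gram31 (i j : Fin 4) : ℂ :=
  if i = j then (if (i : ℕ) < 3 then 1 else -1) else 0

/-- A real subspace `P` of `ℂ^{n+2}` has signature `(3,1)` if it admits a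
basis whose Gram matrix with respect to `B` is `diag(1,1,1,-1)`. -/
def hasSig31 (n : ℕ) (P : Submodule ℝ (Cn n)) : Prop :=
  ∃ b : Fin 4 → Cn n, (∀ i, b i ∈ P) ∧
    Submodule.span ℝ (Set.range b) = P ∧
    ∀ i j, Bf n (b i) (b j) = gram31 i j

/-- The orthogonal complement of a subspace with respect to `B`. -/
def perp (n : ℕ) (V : Submodule ℂ (Cn n)) : Submodule ℂ (Cn n) where
  carrier := {v | ∀ w ∈ V, Bf n v w = 0}
  add_mem' := by
    intro a b ha hb w hw
    rw [Bf_add_left, ha w hw, hb w hw, add_zero]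
  zero_mem' := by
    intro w hw
    exact Bf_zero_left w
  smul_mem' := by
    intro c v hv w hw
    rw [Bf_smul_left, hv w hw, mul_zero]

/-- `ρ` is the reflection across `V`: the identity on `V` and minus the identity
on `V^⊥`. -/
def IsReflection (n : ℕ) (V : Submodule ℂ (Cn n)) (ρ : Cn n →ₗ[ℂ] Cn n) : Prop :=
  (∀ v ∈ V, ρ v = v) ∧ (∀ v ∈ perp n V, ρ v = -v)

/-- The automorphism `Γ^{ℓ⁺}_{ℓ⁻}(λ)`, where `ℓ⁺, ℓ⁻` are the complementary null
lines spanned by `u` and `w`: it is multiplication by `λ` on `ℓ⁺`, by `λ⁻¹` on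
`ℓ⁻` and the identity on `(ℓ⁺ ⊕ ℓ⁻)^⊥`. -/
def GammaL (n : ℕ) (u w : Cn n) (lam : ℂ) : Cn n →ₗ[ℂ] Cn n where
  toFun v := v + ((lam - 1) * (Bf n v w / Bf n u w)) • u
      + ((lam⁻¹ - 1) * (Bf n v u / Bf n u w)) • w
  map_add' a b := by
    simp only [Bf_add_left]
    module
  map_smul' c v := by
    simp only [Bf_smul_left, RingHom.id_apply]
    module

/-- `λ ↦ λ* = 1/λ̄`. -/
def cstar (z : ℂ) : ℂ := (starRingEnd ℂ z)⁻¹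

/-- The linear fractional transformation appearing in the simple factor
`p^V_{α,L}`. -/
def psi (α lam : ℂ) : ℂ := (1 + α) * (lam - α) / ((1 - α) * (lam + α))

/-- The simple factor `p^V_{α,L}(λ) = Γ^L_{ρ_V L}((1+α)(λ-α)/((1-α)(λ+α)))`,
where `ρ` is the reflection across `V` and `ℓ` spans the null line `L`. -/
def pSF (n : ℕ) (ρ : Cn n →ₗ[ℂ] Cn n) (ℓ : Cn n) (α lam : ℂ) : Cn n →ₗ[ℂ] Cn n :=
  GammaL n ℓ (ρ ℓ) (psi α lam)

/-- The value `p^V_{α,L}(∞) = Γ^L_{ρ_V L}((1+α)/(1-α))`. -/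
def pSFinf (n : ℕ) (ρ : Cn n →ₗ[ℂ] Cn n) (ℓ : Cn n) (α : ℂ) : Cn n →ₗ[ℂ] Cn n :=
  GammaL n ℓ (ρ ℓ) ((1 + α) / (1 - α))

/-- `T̄ = C ∘ T ∘ C`, the conjugate of a `ℂ`-linear map of `ℂ^{n+2}`. -/
def barMap {n : ℕ} (T : Cn n →ₗ[ℂ] Cn n) : Cn n →ₗ[ℂ] Cn n where
  toFun v := conjSL n (T (conjSL n v))
  map_add' a b := by simp
  map_smul' c v := by
    simp only [map_smulₛₗ, map_smul, RingHom.id_apply, RingHomCompTriple.comp_apply]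

/-!
Take a real basis `b` of `W` with Gram matrix `diag(1,1,1,-1)` and, by diagonalising `B` on
the real points of `TW`, a real basis `e` of `TW` with Gram matrix `diag D`, `D i = ±1`. In the
bases `b` and `d = T⁻¹ e` of `W`, the matrix of `T⁻¹ ∘ T̄` is the complex conjugate of the
matrix expressing `b` in terms of `d`, so its determinant on `W` is `w / w̄`, where `w` is the
determinant of the change of basis from `b` to `d`. Comparing the Gram matrices of `b` and `d`
gives `w² = -∏ D i`, so `|w| = 1` and the determinant is `w² = -∏ D i`. As `ℝ^{n+1,1}` contains
no two orthogonal timelike vectors, at most one `D i` is `-1`; hence the determinant is `1`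
exactly when the real points of `TW` have signature `(3,1)`.
-/

open Submodule

section Form

variable {n : ℕ}

lemma Bf_comm (v w : Cn n) : Bf n v w = Bf n w v := by
  unfold Bf; exact Finset.sum_congr rfl fun i _ => by ring

def BfL (n : ℕ) : Cn n →ₗ[ℂ] Cn n →ₗ[ℂ] ℂ :=
  LinearMap.mk₂ ℂ (Bf n) Bf_add_left Bf_smul_left
    (fun v w w' => by rw [Bf_comm, Bf_add_left, Bf_comm w v, Bf_comm w' v])
    (fun c v w => by rw [smul_eq_mul, Bf_comm, Bf_smul_left, Bf_comm w v])

@[simp] lemma BfL_apply (v w : Cn n) : BfL n v w = Bf n v w := rfl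

lemma Bf_smul_right (c : ℂ) (v w : Cn n) : Bf n v (c • w) = c * Bf n v w :=
  (BfL n v).map_smul c w

lemma Bf_sub_left (v v' w : Cn n) : Bf n (v - v') w = Bf n v w - Bf n v' w :=
  (BfL n).map_sub₂ v v' w

lemma Bf_sub_right (v w w' : Cn n) : Bf n v (w - w') = Bf n v w - Bf n v w' :=
  (BfL n v).map_sub w w'

lemma Bf_sum_left {ι : Type*} (s : Finset ι) (f : ι → Cn n) (w : Cn n) :
    Bf n (∑ i ∈ s, f i) w = ∑ i ∈ s, Bf n (f i) w := by
  simpa only [BfL_apply, LinearMap.coe_sum, Finset.sum_apply] using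
    LinearMap.congr_fun (map_sum (BfL n) f s) w

lemma Bf_real_smul_left (r : ℝ) (v w : Cn n) : Bf n (r • v) w = r * Bf n v w :=
  Bf_smul_left (r : ℂ) v w

lemma Bf_real_smul_right (r : ℝ) (v w : Cn n) : Bf n v (r • w) = r * Bf n v w :=
  Bf_smul_right (r : ℂ) v w

lemma linearIndependent_of_Bf_diagonal {ι : Type*} [Fintype ι] [DecidableEq ι]
    {v : ι → Cn n} {D : ι → ℂ} (hD : ∀ i, D i ≠ 0)
    (hv : ∀ i j, Bf n (v i) (v j) = if i = j then D i else 0) :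
    LinearIndependent ℂ v := by
  rw [Fintype.linearIndependent_iff]
  intro g hg j
  have h0 : Bf n (∑ i, g i • v i) (v j) = g j * D j := by
    simp [Bf_sum_left, Bf_smul_left, hv]
  rw [hg, Bf_zero_left] at h0
  exact (mul_eq_zero.mp h0.symm).resolve_right (hD j)

def IsNondegOn (U : Submodule ℂ (Cn n)) : Prop :=
  ∀ v ∈ U, (∀ w ∈ U, Bf n v w = 0) → v = 0

end Form

section Conj

variable {n : ℕ}

@[simp] lemma conjSL_apply (v : Cn n) (i : Fin (n + 2)) :
    conjSL n v i = starRingEnd ℂ (v i) := rfl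

@[simp] lemma conjSL_conjSL (v : Cn n) : conjSL n (conjSL n v) = v := by
  funext i; simp

lemma conjSL_eq_self {x : Cn n} (hx : x ∈ realSub n) : conjSL n x = x := funext hx

lemma conjSL_mem {U : Submodule ℂ (Cn n)} (hU : conjSub U = U) {x : Cn n} (hx : x ∈ U) :
    conjSL n x ∈ U :=
  hU ▸ mem_map_of_mem hx

lemma exists_eq_add_I_smul_of_mem {U : Submodule ℂ (Cn n)} (hU : conjSub U = U) {w : Cn n}
    (hw : w ∈ U) :
    ∃ a ∈ realPoints U, ∃ b ∈ realPoints U, w = a + Complex.I • b := by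
  have hcw := conjSL_mem hU hw
  refine ⟨(1 / 2 : ℂ) • (w + conjSL n w), ⟨U.smul_mem _ (U.add_mem hw hcw), fun i => ?_⟩,
    (-Complex.I / 2) • (w - conjSL n w), ⟨U.smul_mem _ (U.sub_mem hw hcw), fun i => ?_⟩, ?_⟩
  · simp only [Pi.smul_apply, Pi.add_apply, conjSL_apply, smul_eq_mul, map_mul, map_add,
      Complex.conj_conj, map_div₀, map_one, map_ofNat]
    ring
  · simp only [Pi.smul_apply, Pi.sub_apply, conjSL_apply, smul_eq_mul, map_mul, map_sub,
      Complex.conj_conj, map_div₀, map_neg, Complex.conj_I, map_ofNat]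
    ring
  · funext i
    simp only [Pi.add_apply, Pi.sub_apply, Pi.smul_apply, smul_eq_mul]
    linear_combination ((w i - conjSL n w i) / 2) * Complex.I_mul_I

lemma span_complex_eq_of_span_real {U : Submodule ℂ (Cn n)} (hU : conjSub U = U)
    {ι : Type*} {b : ι → Cn n} (hb : span ℝ (Set.range b) = realPoints U) :
    span ℂ (Set.range b) = U := by
  have hreal : realPoints U ≤ (span ℂ (Set.range b)).restrictScalars ℝ :=
    hb ▸ span_le.mpr fun y hy => subset_span hy
  refine le_antisymm (span_le.mpr ?_) fun w hw => ?_
  · rintro _ ⟨i, rfl⟩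
    exact (hb.le (subset_span ⟨i, rfl⟩)).1
  · obtain ⟨a, ha, c, hc, rfl⟩ := exists_eq_add_I_smul_of_mem hU hw
    exact add_mem (hreal ha) (smul_mem _ _ (hreal hc))

end Conj

section Lorentz

variable {n : ℕ}

lemma Bf_conjSL (v w : Cn n) : Bf n (conjSL n v) (conjSL n w) = starRingEnd ℂ (Bf n v w) := by
  simp only [Bf, map_sum, conjSL_apply, map_mul, apply_ite (starRingEnd ℂ), map_one, map_neg]

lemma ofReal_re_Bf {x y : Cn n} (hx : x ∈ realSub n) (hy : y ∈ realSub n) :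
    ((Bf n x y).re : ℂ) = Bf n x y :=
  Complex.conj_eq_iff_re.mp (by rw [← Bf_conjSL, conjSL_eq_self hx, conjSL_eq_self hy])

lemma exists_eq_ofReal_of_mem_realSub {x : Cn n} (hx : x ∈ realSub n) (i : Fin (n + 2)) :
    ∃ r : ℝ, x i = r :=
  ⟨(x i).re, (Complex.conj_eq_iff_re.mp (hx i)).symm⟩

lemma exists_nonneg_Bf_self_eq {x : Cn n} (hx : x ∈ realSub n)
    (hlast : x (Fin.last (n + 1)) = 0) : ∃ r : ℝ, 0 ≤ r ∧ Bf n x x = r := by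
  refine ⟨∑ i, (x i).re ^ 2, by positivity, ?_⟩
  rw [Bf, Complex.ofReal_sum]
  refine Finset.sum_congr rfl fun i _ => ?_
  obtain ⟨r, hr⟩ := exists_eq_ofReal_of_mem_realSub hx i
  split_ifs with hi
  · rw [hr, Complex.ofReal_re]; push_cast; ring
  · obtain rfl : i = Fin.last (n + 1) := Fin.ext (by have := i.isLt; simp; omega)
    simp [hlast]

lemma Bf_ne_zero_of_timelike {x y : Cn n} (hx : x ∈ realSub n) (hy : y ∈ realSub n)
    (hxx : Bf n x x = -1) (hyy : Bf n y y = -1) : Bf n x y ≠ 0 := by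
  intro hxy
  obtain ⟨c, hc⟩ := exists_eq_ofReal_of_mem_realSub hx (Fin.last (n + 1))
  obtain ⟨a, ha⟩ := exists_eq_ofReal_of_mem_realSub hy (Fin.last (n + 1))
  -- `u` has no time component, so `B(u, u) = -(a ^ 2 + c ^ 2)` cannot be negative
  set u : Cn n := a • x - c • y
  have hu : u ∈ realSub n := sub_mem (smul_mem _ a hx) (smul_mem _ c hy)
  have hulast : u (Fin.last (n + 1)) = 0 := by
    simp only [u, Pi.sub_apply, Pi.smul_apply, Complex.real_smul, ha, hc]; ring
  have huu : Bf n u u = ((-(a ^ 2 + c ^ 2) : ℝ) : ℂ) := by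
    simp only [u, Bf_sub_left, Bf_sub_right, Bf_real_smul_left, Bf_real_smul_right, hxx, hyy,
      hxy, Bf_comm y x]
    push_cast; ring
  obtain ⟨r, hr, hru⟩ := exists_nonneg_Bf_self_eq hu hulast
  have hc0 : c = 0 := by
    have : -(a ^ 2 + c ^ 2) = r := by exact_mod_cast huu.symm.trans hru
    nlinarith
  obtain ⟨r', hr', hrx⟩ := exists_nonneg_Bf_self_eq hx (by rw [hc, hc0, Complex.ofReal_zero])
  rw [hxx] at hrx
  have : (-1 : ℝ) = r' := by exact_mod_cast hrx
  linarith

end Lorentz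

section Frame

variable {n : ℕ} {ι κ : Type*} [DecidableEq ι] [DecidableEq κ]

def IsDiagFrame (P : Submodule ℝ (Cn n)) (e : ι → Cn n) (D : ι → ℂ) : Prop :=
  (∀ i, e i ∈ P) ∧ span ℝ (Set.range e) = P ∧
    ∀ i j, Bf n (e i) (e j) = if i = j then D i else 0

def sig31 (i : Fin 4) : ℂ := if (i : ℕ) < 3 then 1 else -1

lemma sig31_sq (i : Fin 4) : sig31 i ^ 2 = 1 := by
  unfold sig31; split_ifs <;> norm_num

lemma prod_sig31 : ∏ i, sig31 i = -1 := by
  simp [sig31, Fin.prod_univ_four]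

lemma hasSig31_iff {P : Submodule ℝ (Cn n)} : hasSig31 n P ↔ ∃ e, IsDiagFrame P e sig31 :=
  Iff.rfl

lemma IsDiagFrame.comp_equiv {P : Submodule ℝ (Cn n)} {e : ι → Cn n} {D : ι → ℂ}
    (h : IsDiagFrame P e D) (σ : κ ≃ ι) : IsDiagFrame P (e ∘ σ) (D ∘ σ) := by
  refine ⟨fun k => h.1 (σ k), by rw [EquivLike.range_comp, h.2.1], fun k l => ?_⟩
  simp only [Function.comp_apply, h.2.2, σ.injective.eq_iff]

variable {U : Submodule ℂ (Cn n)} {e : ι → Cn n} {D : ι → ℂ}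

lemma IsDiagFrame.linearIndependent [Fintype ι] {P : Submodule ℝ (Cn n)}
    (h : IsDiagFrame P e D) (hD : ∀ i, D i ≠ 0) : LinearIndependent ℂ e :=
  linearIndependent_of_Bf_diagonal hD h.2.2

lemma IsDiagFrame.span_complex (hU : conjSub U = U) (h : IsDiagFrame (realPoints U) e D) :
    span ℂ (Set.range e) = U :=
  span_complex_eq_of_span_real hU h.2.1

def IsDiagFrame.basis [Fintype ι] (hU : conjSub U = U) (h : IsDiagFrame (realPoints U) e D)
    (hD : ∀ i, D i ≠ 0) : Basis ι ℂ U :=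
  (Basis.span (h.linearIndependent hD)).map (LinearEquiv.ofEq _ _ (h.span_complex hU))

@[simp] lemma IsDiagFrame.coe_basis [Fintype ι] (hU : conjSub U = U)
    (h : IsDiagFrame (realPoints U) e D) (hD : ∀ i, D i ≠ 0) (i : ι) :
    (h.basis hU hD i : Cn n) = e i := by
  simp [IsDiagFrame.basis, Basis.span_apply]

lemma IsDiagFrame.exists_sign {P : Submodule ℝ (Cn n)} {c : ι → ℝ}
    (h : IsDiagFrame P e fun i => (c i : ℂ)) (hc : ∀ i, c i ≠ 0) :
    ∃ e' : ι → Cn n, IsDiagFrame P e' fun i => if 0 < c i then 1 else -1 := by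
  have hs : ∀ i, √|c i| ≠ 0 := fun i => (Real.sqrt_pos.mpr (abs_pos.mpr (hc i))).ne'
  have he : ∀ i, e i = √|c i| • (√|c i|)⁻¹ • e i := fun i => by
    rw [smul_smul, mul_inv_cancel₀ (hs i), one_smul]
  refine ⟨fun i => (√|c i|)⁻¹ • e i, fun i => smul_mem _ _ (h.1 i), ?_, fun i j => ?_⟩
  · refine le_antisymm (span_le.mpr ?_) (h.2.1 ▸ span_le.mpr ?_)
    · rintro _ ⟨i, rfl⟩; exact smul_mem _ _ (h.1 i)
    · rintro _ ⟨i, rfl⟩; exact he i ▸ smul_mem _ _ (subset_span ⟨i, rfl⟩)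
  simp only [Bf_real_smul_left, Bf_real_smul_right, h.2.2]
  rcases eq_or_ne i j with rfl | hij
  · have hsq : (√|c i|)⁻¹ * ((√|c i|)⁻¹ * c i) = c i / |c i| := by
      rw [← mul_assoc, ← mul_inv, Real.mul_self_sqrt (abs_nonneg _), inv_mul_eq_div]
    rw [if_pos rfl, if_pos rfl]
    split_ifs with hci
    · have : (√|c i|)⁻¹ * ((√|c i|)⁻¹ * c i) = 1 := by
        rw [hsq, abs_of_pos hci, div_self (hc i)]
      exact_mod_cast this
    · have : (√|c i|)⁻¹ * ((√|c i|)⁻¹ * c i) = -1 := by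
        rw [hsq, abs_of_neg (lt_of_le_of_ne (not_lt.mp hci) (hc i)), div_neg, div_self (hc i)]
      exact_mod_cast this
  · simp [hij]

/-- `B` is real-valued on the real points of `U`. -/
def realForm (U : Submodule ℂ (Cn n)) : LinearMap.BilinForm ℝ (realPoints U) :=
  (((BfL n).restrictScalars₁₂ ℝ ℝ).compl₁₂ (realPoints U).subtype
    (realPoints U).subtype).compr₂ Complex.reLm

lemma realForm_apply (x y : realPoints U) : (realForm U x y : ℂ) = Bf n x y :=
  ofReal_re_Bf x.2.2 y.2.2

lemma exists_orthogonal_diagFrame (hU : conjSub U = U) (hnd : IsNondegOn U) :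
    ∃ (c : Fin (finrank ℝ (realPoints U)) → ℝ) (e : Fin (finrank ℝ (realPoints U)) → Cn n),
      IsDiagFrame (realPoints U) e (fun i => (c i : ℂ)) ∧ ∀ i, c i ≠ 0 := by
  have hsymm : LinearMap.IsSymm (realForm U) := LinearMap.isSymm_def.2 fun x y => by
    apply Complex.ofReal_injective
    simp only [RingHom.id_apply, realForm_apply, Bf_comm]
  obtain ⟨v, hv⟩ := LinearMap.BilinForm.exists_orthogonal_basis hsymm
  have hframe : IsDiagFrame (realPoints U) (fun i => (v i : Cn n))
      (fun i => (realForm U (v i) (v i) : ℂ)) := by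
    refine ⟨fun i => (v i).2, ?_, fun i j => ?_⟩
    · have := congrArg (Submodule.map (realPoints U).subtype) v.span_eq
      rwa [map_span, Submodule.map_top, range_subtype, ← Set.range_comp] at this
    · rw [← realForm_apply]
      split_ifs with hij
      · rw [hij]
      · rw [hv hij, Complex.ofReal_zero]
  refine ⟨_, _, hframe, fun i hci => v.ne_zero i (Subtype.ext (hnd _ (v i).2.1 ?_))⟩
  -- `v i` is `B`-orthogonal to the frame, hence to its complex span `U`
  have hker : span ℂ (Set.range fun j => (v j : Cn n)) ≤ LinearMap.ker (BfL n (v i)) := by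
    refine span_le.mpr ?_
    rintro _ ⟨j, rfl⟩
    simp only [SetLike.mem_coe, LinearMap.mem_ker, BfL_apply, hframe.2.2]
    split_ifs with hij
    · subst hij; rw [hci, Complex.ofReal_zero]
    · rfl
  intro w hw
  exact hker ((hframe.span_complex hU).symm ▸ hw)

lemma exists_sign_diagFrame {m : ℕ} (hU : conjSub U = U) (hnd : IsNondegOn U)
    (hdim : finrank ℂ U = m) :
    ∃ (e : Fin m → Cn n) (D : Fin m → ℂ),
      IsDiagFrame (realPoints U) e D ∧ ∀ i, D i = 1 ∨ D i = -1 := by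
  obtain ⟨c, e, he, hc⟩ := exists_orthogonal_diagFrame hU hnd
  obtain ⟨e', he'⟩ := he.exists_sign hc
  have hD : ∀ i, (if 0 < c i then 1 else -1 : ℂ) = 1 ∨ (if 0 < c i then 1 else -1 : ℂ) = -1 :=
    fun i => by split_ifs <;> simp
  have hcard : m = finrank ℝ (realPoints U) := hdim ▸ by
    simpa using
      finrank_eq_card_basis (he'.basis hU fun i => by rcases hD i with h | h <;> simp [h])
  exact ⟨_, _, he'.comp_equiv (finCongr hcard), fun i => hD _⟩

lemma hasSig31_of_sign_diagFrame {P : Submodule ℝ (Cn n)} (hP : P ≤ realSub n)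
    {e : Fin 4 → Cn n} {D : Fin 4 → ℂ} (h : IsDiagFrame P e D)
    (hD : ∀ i, D i = 1 ∨ D i = -1) (hprod : ∏ i, D i = -1) : hasSig31 n P := by
  obtain ⟨i₀, hi₀⟩ : ∃ i₀, D i₀ = -1 := by
    by_contra! hno
    rw [Finset.prod_eq_one fun i _ => (hD i).resolve_right (hno i)] at hprod
    norm_num at hprod
  have hone : ∀ j ≠ i₀, D j = 1 := fun j hj => (hD j).resolve_right fun hj' =>
    Bf_ne_zero_of_timelike (hP (h.1 i₀)) (hP (h.1 j)) (by simp [h.2.2, hi₀])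
      (by simp [h.2.2, hj']) (by simp [h.2.2, Ne.symm hj])
  refine hasSig31_iff.mpr ⟨_, (funext fun k => ?_ : D ∘ Equiv.swap i₀ 3 = sig31) ▸
    h.comp_equiv (Equiv.swap i₀ 3)⟩
  by_cases hk : k = 3
  · subst hk; simp [hi₀, sig31]
  · rw [Function.comp_apply, hone _ ((Equiv.swap i₀ 3).injective.ne hk |>.trans_eq
      (Equiv.swap_apply_right i₀ 3)), sig31, if_pos (by omega)]

end Frame

lemma conj_inv_mul_self_of_pow_four_eq_one {w : ℂ} (hw : w ^ 4 = 1) :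
    starRingEnd ℂ w⁻¹ * w = w ^ 2 := by
  have hnorm : ‖w‖ = 1 := by
    have : ‖w‖ ^ 4 = 1 := by rw [← norm_pow, hw, norm_one]
    exact (pow_eq_one_iff_of_nonneg (norm_nonneg w) (by norm_num)).mp this
  rw [map_inv₀, ← Complex.inv_eq_conj hnorm, inv_inv, sq]

section Twist

variable {n : ℕ} {W : Submodule ℂ (Cn n)} {T : Cn n ≃ₗ[ℂ] Cn n}

def twist (T : Cn n ≃ₗ[ℂ] Cn n) : Cn n →ₗ[ℂ] Cn n :=
  (T.symm : Cn n →ₗ[ℂ] Cn n).comp (barMap (T : Cn n →ₗ[ℂ] Cn n))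

lemma twist_apply (v : Cn n) : twist T v = T.symm (conjSL n (T (conjSL n v))) := rfl

lemma coe_twist : ⇑(twist T) = T.symm ∘ conjSL n ∘ T ∘ conjSL n := rfl

lemma IsNondegOn.map (hT : ∀ v w, Bf n (T v) (T w) = Bf n v w)
    (hnd : IsNondegOn W) : IsNondegOn (W.map (T : Cn n →ₗ[ℂ] Cn n)) := by
  rintro _ ⟨v, hv, rfl⟩ hperp
  rw [hnd v hv fun w hw => hT v w ▸ hperp _ ⟨w, hw, rfl⟩, map_zero]

lemma bijective_twist (T : Cn n ≃ₗ[ℂ] Cn n) : Function.Bijective (twist T) := by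
  have hconj : Function.Bijective (conjSL n) := Function.Involutive.bijective conjSL_conjSL
  rw [coe_twist]
  exact T.symm.bijective.comp (hconj.comp (T.bijective.comp hconj))

lemma map_twist (hW : conjSub W = W)
    (hTW : conjSub (W.map (T : Cn n →ₗ[ℂ] Cn n)) = W.map (T : Cn n →ₗ[ℂ] Cn n)) :
    W.map (twist T) = W := by
  apply SetLike.coe_injective
  have hW' : conjSL n '' W = W := congrArg SetLike.coe hW
  have hTW' : conjSL n '' (T '' W) = T '' W := congrArg SetLike.coe hTW
  rw [map_coe, coe_twist, Set.image_comp,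
    Set.image_comp, Set.image_comp, hW', hTW', ← Set.image_comp]
  simp

lemma toMatrix_restrict_twist {ι : Type*} [Fintype ι] [DecidableEq ι]
    (h : ∀ x ∈ W, twist T x ∈ W)
    (b d : Basis ι ℂ W) (hb : ∀ i, (b i : Cn n) ∈ realSub n) (hd : ∀ k, T (d k) ∈ realSub n) :
    LinearMap.toMatrix b d ((twist T).restrict h) = (d.toMatrix b).map (starRingEnd ℂ) := by
  ext k i
  rw [LinearMap.toMatrix_apply, Matrix.map_apply, Basis.toMatrix_apply]
  suffices (twist T).restrict h (b i) = ∑ k, starRingEnd ℂ (d.repr (b i) k) • d k by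
    rw [this, Basis.repr_sum_self]
  have hbi : (b i : Cn n) = ∑ k, d.repr (b i) k • (d k : Cn n) := by
    simpa only [map_sum, map_smul, Submodule.coe_subtype] using
      congrArg W.subtype (d.sum_repr (b i)).symm
  apply Subtype.ext
  rw [LinearMap.coe_restrict_apply, twist_apply, conjSL_eq_self (hb i), hbi]
  simp [map_sum, map_smulₛₗ, conjSL_eq_self (hd _)]

lemma det_restrict_twist_eq {ι : Type*} [Fintype ι] [DecidableEq ι]
    (h : ∀ x ∈ W, twist T x ∈ W)
    (b d : Basis ι ℂ W) (hb : ∀ i, (b i : Cn n) ∈ realSub n) (hd : ∀ k, T (d k) ∈ realSub n)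
    {G D : ι → ℂ} (hG : ∀ i, G i ^ 2 = 1) (hD : ∀ i, D i ^ 2 = 1)
    (hbB : ∀ i j, Bf n (b i) (b j) = if i = j then G i else 0)
    (hdB : ∀ i j, Bf n (d i) (d j) = if i = j then D i else 0) :
    LinearMap.det ((twist T).restrict h) = (∏ i, G i) * ∏ i, D i := by
  set w := (b.toMatrix d).det
  have hinv : (d.toMatrix b).det = w⁻¹ :=
    eq_inv_of_mul_eq_one_left (by rw [← Matrix.det_mul, Basis.toMatrix_mul_toMatrix_flip,
      Matrix.det_one])
  have hdet : LinearMap.det ((twist T).restrict h) = starRingEnd ℂ w⁻¹ * w := by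
    rw [← LinearMap.det_toMatrix d,
      ← linearMap_toMatrix_mul_basis_toMatrix (b := d) (b' := b) (c' := d), Matrix.det_mul,
      toMatrix_restrict_twist h b d hb hd, ← RingHom.mapMatrix_apply,
      ← RingHom.map_det, hinv]
  let β : LinearMap.BilinForm ℂ W := (BfL n).compl₁₂ W.subtype W.subtype
  have hgram : ∀ (c : Basis ι ℂ W) (E : ι → ℂ),
      (∀ i j, Bf n (c i) (c j) = if i = j then E i else 0) →
        LinearMap.BilinForm.toMatrix c β = Matrix.diagonal E := fun c E hc => by
    ext i j
    rw [LinearMap.BilinForm.toMatrix_apply, Matrix.diagonal_apply]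
    exact hc i j
  have hsq : w * (∏ i, G i) * w = ∏ i, D i := by
    have := congrArg Matrix.det (LinearMap.BilinForm.toMatrix_mul_basis_toMatrix b d β)
    rwa [hgram b G hbB, hgram d D hdB, Matrix.det_mul, Matrix.det_mul, Matrix.det_transpose,
      Matrix.det_diagonal, Matrix.det_diagonal] at this
  have hGG : (∏ i, G i) * ∏ i, G i = 1 := by
    rw [← Finset.prod_mul_distrib, Finset.prod_eq_one fun i _ => (sq (G i)).symm.trans (hG i)]
  have hDD : (∏ i, D i) * ∏ i, D i = 1 := by
    rw [← Finset.prod_mul_distrib, Finset.prod_eq_one fun i _ => (sq (D i)).symm.trans (hD i)]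
  have hw2 : w ^ 2 = (∏ i, G i) * ∏ i, D i := by
    linear_combination (∏ i, G i) * hsq - w ^ 2 * hGG
  have hw4 : w ^ 4 = 1 := by
    linear_combination (w ^ 2 + (∏ i, G i) * ∏ i, D i) * hw2 + ((∏ i, D i) * ∏ i, D i) * hGG
      + hDD
  rw [hdet, conj_inv_mul_self_of_pow_four_eq_one hw4, hw2]

lemma det_restrict_twist_eq_of_diagFrame (hT : ∀ v w, Bf n (T v) (T w) = Bf n v w)
    (h : ∀ x ∈ W, twist T x ∈ W) (hW : conjSub W = W)
    (hTW : conjSub (W.map (T : Cn n →ₗ[ℂ] Cn n)) = W.map (T : Cn n →ₗ[ℂ] Cn n))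
    {ι : Type*} [Fintype ι] [DecidableEq ι] {b e : ι → Cn n} {G D : ι → ℂ}
    (hb : IsDiagFrame (realPoints W) b G)
    (he : IsDiagFrame (realPoints (W.map (T : Cn n →ₗ[ℂ] Cn n))) e D)
    (hG : ∀ i, G i ^ 2 = 1) (hD : ∀ i, D i ^ 2 = 1) :
    LinearMap.det ((twist T).restrict h) = (∏ i, G i) * ∏ i, D i := by
  have hne : ∀ {E : ι → ℂ}, (∀ i, E i ^ 2 = 1) → ∀ i, E i ≠ 0 := fun hE i h0 => by
    simpa [h0] using hE i
  let d := (he.basis hTW (hne hD)).map (T.submoduleMap W).symm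
  have hTd : ∀ k, T (d k) = e k := fun k => by simp [d]
  refine det_restrict_twist_eq h (hb.basis hW (hne hG)) d (fun i => by simpa using (hb.1 i).2)
    (fun k => hTd k ▸ (he.1 k).2) hG hD (by simpa using hb.2.2) fun i j => ?_
  rw [← hT, hTd, hTd, he.2.2]

end Twist

theorem statement1_general (n : ℕ) (W : Submodule ℂ (Cn n))
    (hdim : Module.finrank ℂ W = 4)
    (hconj : conjSub W = W)
    (hnd : ∀ v ∈ W, (∀ w ∈ W, Bf n v w = 0) → v = 0)
    (hsig : hasSig31 n (realPoints W))
    (T : Cn n ≃ₗ[ℂ] Cn n)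
    (hT : ∀ v w, Bf n (T v) (T w) = Bf n v w)
    (hconjTW : conjSub (W.map (T : Cn n →ₗ[ℂ] Cn n)) = W.map (T : Cn n →ₗ[ℂ] Cn n))
    (A : Cn n →ₗ[ℂ] Cn n)
    (hA : A = (T.symm : Cn n →ₗ[ℂ] Cn n).comp (barMap (T : Cn n →ₗ[ℂ] Cn n))) :
    Function.Bijective A ∧ Submodule.map A W = W ∧
      ∀ h : ∀ x ∈ W, A x ∈ W,
        (hasSig31 n (realPoints (W.map (T : Cn n →ₗ[ℂ] Cn n))) ↔
          LinearMap.det (A.restrict h) = 1) := by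
  obtain rfl : A = twist T := hA
  refine ⟨bijective_twist T, map_twist hconj hconjTW, fun h => ?_⟩
  obtain ⟨b, hb⟩ := hasSig31_iff.mp hsig
  have hdet {e : Fin 4 → Cn n} {D : Fin 4 → ℂ}
      (he : IsDiagFrame (realPoints (W.map (T : Cn n →ₗ[ℂ] Cn n))) e D) (hD : ∀ i, D i ^ 2 = 1) :
      LinearMap.det ((twist T).restrict h) = -∏ i, D i := by
    rw [det_restrict_twist_eq_of_diagFrame hT h hconj hconjTW hb he sig31_sq hD, prod_sig31,
      neg_one_mul]
  constructor
  · intro hsigTW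
    obtain ⟨e, he⟩ := hasSig31_iff.mp hsigTW
    rw [hdet he sig31_sq, prod_sig31, neg_neg]
  · intro hdet1
    obtain ⟨e, D, he, hD⟩ := exists_sign_diagFrame hconjTW (IsNondegOn.map hT hnd)
      (by rw [LinearEquiv.finrank_map_eq, hdim])
    rw [hdet he fun i => by rcases hD i with h | h <;> simp [h]] at hdet1
    exact hasSig31_of_sign_diagFrame inf_le_right he hD (neg_eq_iff_eq_neg.mp hdet1)

/-- Let `W ⊆ ℂ^{n+2}` be a 4-dimensional conjugation-stable complex
subspace on which `B` is nondegenerate and whose real points have signature `(3,1)`,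
and let `T ∈ O(ℂ^{n+2})` be such that `TW` is conjugation stable.  Then `T⁻¹ ∘ T̄` is a
`ℂ`-linear automorphism of `ℂ^{n+2}` mapping `W` to itself, and the real points of `TW`
have signature `(3,1)` if and only if `det ((T⁻¹ ∘ T̄)|_W) = 1`. -/
theorem statement1 (n : ℕ) (hn : 2 ≤ n) (W : Submodule ℂ (Cn n))
    (hdim : Module.finrank ℂ W = 4)
    (hconj : conjSub W = W)
    (hnd : ∀ v ∈ W, (∀ w ∈ W, Bf n v w = 0) → v = 0)
    (hsig : hasSig31 n (realPoints W))
    (T : Cn n ≃ₗ[ℂ] Cn n)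
    (hT : ∀ v w, Bf n (T v) (T w) = Bf n v w)
    (hconjTW : conjSub (W.map (T : Cn n →ₗ[ℂ] Cn n)) = W.map (T : Cn n →ₗ[ℂ] Cn n))
    (A : Cn n →ₗ[ℂ] Cn n)
    (hA : A = (T.symm : Cn n →ₗ[ℂ] Cn n).comp (barMap (T : Cn n →ₗ[ℂ] Cn n))) :
    Function.Bijective A ∧ Submodule.map A W = W ∧
      ∀ h : ∀ x ∈ W, A x ∈ W,
        (hasSig31 n (realPoints (W.map (T : Cn n →ₗ[ℂ] Cn n))) ↔
          LinearMap.det (A.restrict h) = 1) :=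
  statement1_general n W hdim hconj hnd hsig T hT hconjTW A hA
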